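/- For every r > 0: 1 ≥ ∏_{n≥0} Γ(n+1, r²)/n! > 0, and the map r ↦ ∏_{n≥0} Γ(n+1, r²)/n! is strictly decreasing on (0, ∞) with limit 1 at 0 and 0 at ∞. -/

import Mathlib

open MeasureTheory Real Filter Topology Set

/-- `uGamma n t = Γ(n+1, t) = ∫_t^∞ e^{-u} u^n du`, the upper incomplete gamma function. -/
noncomputable def uGamma (n : ℕ) (t : ℝ) : ℝ := ∫ u in Set.Ioi t, Real.exp (-u) * u ^ n

lemma integrableOn_uG (n : ℕ) {t : ℝ} (ht : 0 ≤ t) :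
    IntegrableOn (fun u : ℝ => Real.exp (-u) * u ^ n) (Set.Ioi t) := by
  have h := Real.GammaIntegral_convergent (s := (n : ℝ) + 1) (by positivity)
  simp only [add_sub_cancel_right, Real.rpow_natCast] at h
  exact h.mono_set (Set.Ioi_subset_Ioi ht)

lemma uGamma_zero (n : ℕ) : uGamma n 0 = (Nat.factorial n : ℝ) := by
  have h := Real.Gamma_eq_integral (s := (n : ℝ) + 1) (by positivity)
  simp only [add_sub_cancel_right, Real.rpow_natCast] at h
  rw [uGamma, ← h]
  exact_mod_cast Real.Gamma_nat_eq_factorial n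

lemma uGamma_split (n : ℕ) {t₁ t₂ : ℝ} (h0 : 0 ≤ t₁) (h : t₁ ≤ t₂) :
    uGamma n t₁ = (∫ u in Set.Ioc t₁ t₂, Real.exp (-u) * u ^ n) + uGamma n t₂ := by
  rw [uGamma, uGamma, ← setIntegral_union (Set.Ioc_disjoint_Ioi le_rfl) measurableSet_Ioi
      ((integrableOn_uG n h0).mono_set Set.Ioc_subset_Ioi_self)
      (integrableOn_uG n (h0.trans h)), Set.Ioc_union_Ioi_eq_Ioi h]

lemma uGamma_nonneg (n : ℕ) (t : ℝ) : 0 ≤ uGamma n t ∨ True := Or.inr trivial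

lemma Ioc_integral_nonneg (n : ℕ) {t₁ t₂ : ℝ} (h0 : 0 ≤ t₁) :
    0 ≤ ∫ u in Set.Ioc t₁ t₂, Real.exp (-u) * u ^ n := by
  refine setIntegral_nonneg measurableSet_Ioc fun x hx => ?_
  have : (0:ℝ) ≤ x := h0.trans hx.1.le
  positivity

lemma uGamma_nonneg' (n : ℕ) {t : ℝ} (ht : 0 ≤ t) : 0 ≤ uGamma n t := by
  refine setIntegral_nonneg measurableSet_Ioi fun x hx => ?_
  have : (0:ℝ) ≤ x := ht.trans (le_of_lt hx)
  positivity

lemma Ioc_integral_pos (n : ℕ) {t₁ t₂ : ℝ} (h0 : 0 ≤ t₁) (h : t₁ < t₂) :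
    0 < ∫ u in Set.Ioc t₁ t₂, Real.exp (-u) * u ^ n := by
  rw [← intervalIntegral.integral_of_le h.le]
  refine intervalIntegral.intervalIntegral_pos_of_pos_on ?_ (fun x hx => ?_) h
  · exact (intervalIntegrable_iff_integrableOn_Ioc_of_le h.le).mpr
      ((integrableOn_uG n h0).mono_set Set.Ioc_subset_Ioi_self)
  · have hx0 : (0:ℝ) < x := h0.trans_lt hx.1
    positivity

lemma uGamma_lt (n : ℕ) {t₁ t₂ : ℝ} (h0 : 0 ≤ t₁) (h : t₁ < t₂) :
    uGamma n t₂ < uGamma n t₁ := by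
  rw [uGamma_split n h0 h.le]
  linarith [Ioc_integral_pos n h0 h]

lemma uGamma_le_uGamma (n : ℕ) {t₁ t₂ : ℝ} (h0 : 0 ≤ t₁) (h : t₁ ≤ t₂) :
    uGamma n t₂ ≤ uGamma n t₁ := by
  rw [uGamma_split n h0 h]
  linarith [Ioc_integral_nonneg n (t₂ := t₂) h0]

lemma uGamma_pos (n : ℕ) {t : ℝ} (ht : 0 ≤ t) : 0 < uGamma n t := by
  rw [uGamma_split n ht (by linarith : t ≤ t + 1)]
  have := Ioc_integral_pos n ht (by linarith : t < t + 1)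
  have := uGamma_nonneg' n (by linarith : (0:ℝ) ≤ t + 1)
  linarith

lemma uGamma_le (n : ℕ) {t : ℝ} (ht : 0 ≤ t) : uGamma n t ≤ (Nat.factorial n : ℝ) := by
  rw [← uGamma_zero n]
  exact uGamma_le_uGamma n le_rfl ht

lemma uGamma_sub_le (n : ℕ) {t : ℝ} (ht : 0 ≤ t) :
    (Nat.factorial n : ℝ) - uGamma n t ≤ t ^ (n + 1) / (n + 1) := by
  rw [← uGamma_zero n, uGamma_split n le_rfl ht, add_sub_cancel_right]
  have h1 : (∫ u in Set.Ioc (0:ℝ) t, Real.exp (-u) * u ^ n) ≤ ∫ u in Set.Ioc (0:ℝ) t, u ^ n := by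
    refine setIntegral_mono_on ((integrableOn_uG n le_rfl).mono_set Set.Ioc_subset_Ioi_self)
      ((continuous_pow n).integrableOn_Ioc) measurableSet_Ioc fun x hx => ?_
    have hx0 : (0:ℝ) ≤ x := hx.1.le
    exact mul_le_of_le_one_left (pow_nonneg hx0 n) (Real.exp_le_one_iff.mpr (by linarith))
  have h2 : (∫ u in Set.Ioc (0:ℝ) t, u ^ n) = t ^ (n + 1) / (n + 1) := by
    rw [← intervalIntegral.integral_of_le ht, integral_pow]
    simp
  linarith

noncomputable def nlt (n : ℕ) (t : ℝ) : ℝ := -Real.log (uGamma n t / (Nat.factorial n : ℝ))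

lemma g_pos (n : ℕ) {t : ℝ} (ht : 0 ≤ t) : 0 < uGamma n t / (Nat.factorial n : ℝ) := by
  have := uGamma_pos n ht
  have := Nat.factorial_pos n
  positivity

lemma g_le_one (n : ℕ) {t : ℝ} (ht : 0 ≤ t) : uGamma n t / (Nat.factorial n : ℝ) ≤ 1 := by
  rw [div_le_one (by exact_mod_cast Nat.factorial_pos n)]
  exact uGamma_le n ht

lemma nlt_nonneg (n : ℕ) {t : ℝ} (ht : 0 ≤ t) : 0 ≤ nlt n t := by
  rw [nlt, neg_nonneg]
  exact Real.log_nonpos (g_pos n ht).le (g_le_one n ht)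

lemma one_sub_g_le (n : ℕ) {t : ℝ} (ht : 0 ≤ t) :
    1 - uGamma n t / (Nat.factorial n : ℝ) ≤ t ^ (n + 1) / (Nat.factorial (n + 1) : ℝ) := by
  have hf : (0:ℝ) < (Nat.factorial n : ℝ) := by exact_mod_cast Nat.factorial_pos n
  have h := uGamma_sub_le n ht
  have : 1 - uGamma n t / (Nat.factorial n : ℝ)
      = ((Nat.factorial n : ℝ) - uGamma n t) / (Nat.factorial n : ℝ) := by
    field_simp
  rw [this, Nat.factorial_succ]
  push_cast
  rw [div_le_div_iff₀ hf (by positivity)]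
  calc ((Nat.factorial n : ℝ) - uGamma n t) * (((n:ℝ) + 1) * (Nat.factorial n : ℝ))
      ≤ (t ^ (n+1) / ((n:ℝ)+1)) * (((n:ℝ) + 1) * (Nat.factorial n : ℝ)) := by
        have hn : (0:ℝ) < (n:ℝ) + 1 := by positivity
        nlinarith [mul_le_mul_of_nonneg_right h (by positivity : (0:ℝ) ≤ ((n:ℝ)+1) * (Nat.factorial n : ℝ))]
    _ = t ^ (n+1) * (Nat.factorial n : ℝ) := by field_simp
  
lemma nlt_le (n : ℕ) {t : ℝ} (ht : 0 ≤ t)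
    (hd : t ^ (n + 1) / (Nat.factorial (n + 1) : ℝ) ≤ 1 / 2) :
    nlt n t ≤ 2 * (t ^ (n + 1) / (Nat.factorial (n + 1) : ℝ)) := by
  set g := uGamma n t / (Nat.factorial n : ℝ) with hgdef
  have hg0 : 0 < g := g_pos n ht
  have hg1 : g ≤ 1 := g_le_one n ht
  have hsub : 1 - g ≤ t ^ (n + 1) / (Nat.factorial (n + 1) : ℝ) := one_sub_g_le n ht
  have hghalf : (1:ℝ)/2 ≤ g := by linarith
  have hlog : -Real.log g ≤ (1 - g) / g := by
    have := Real.log_le_sub_one_of_pos (x := g⁻¹) (by positivity)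
    rw [Real.log_inv] at this
    have : -Real.log g ≤ g⁻¹ - 1 := this
    have hinv : g⁻¹ - 1 = (1 - g) / g := by field_simp
    linarith [hinv ▸ this]
  have : (1 - g) / g ≤ 2 * (1 - g) := by
    rw [div_le_iff₀ hg0]
    nlinarith
  calc nlt n t = -Real.log g := rfl
    _ ≤ (1 - g)/g := hlog
    _ ≤ 2 * (1 - g) := this
    _ ≤ 2 * (t ^ (n + 1) / (Nat.factorial (n + 1) : ℝ)) := by linarith

lemma summable_d {t : ℝ} : Summable (fun n : ℕ => t ^ (n + 1) / (Nat.factorial (n + 1) : ℝ)) :=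
  (summable_nat_add_iff 1).mpr (Real.summable_pow_div_factorial t)

lemma summable_nlt {t : ℝ} (ht : 0 ≤ t) : Summable (fun n => nlt n t) := by
  have hd : Tendsto (fun n : ℕ => t ^ (n + 1) / (Nat.factorial (n + 1) : ℝ)) atTop (𝓝 0) :=
    summable_d.tendsto_atTop_zero
  have hev : ∀ᶠ n in atTop, t ^ (n + 1) / (Nat.factorial (n + 1) : ℝ) ≤ 1/2 :=
    hd.eventually (eventually_le_nhds (by norm_num))
  obtain ⟨N, hN⟩ := eventually_atTop.mp hev
  rw [← summable_nat_add_iff N]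
  refine Summable.of_nonneg_of_le (fun n => nlt_nonneg _ ht)
    (fun n => nlt_le _ ht (hN (n + N) (Nat.le_add_left N n))) ?_
  exact (((summable_nat_add_iff N).mpr (summable_d (t := t))).mul_left 2)

lemma nlt_mono (n : ℕ) {t₁ t₂ : ℝ} (h0 : 0 ≤ t₁) (h : t₁ ≤ t₂) : nlt n t₁ ≤ nlt n t₂ := by
  have := uGamma_le_uGamma n h0 h
  have h2 := g_pos n (h0.trans h)
  exact neg_le_neg (Real.log_le_log h2
    ((div_le_div_iff_of_pos_right (by exact_mod_cast Nat.factorial_pos n)).mpr this))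

lemma nlt_strictMono (n : ℕ) {t₁ t₂ : ℝ} (h0 : 0 ≤ t₁) (h : t₁ < t₂) : nlt n t₁ < nlt n t₂ := by
  have := uGamma_lt n h0 h
  have h2 := g_pos n (h0.trans h.le)
  exact neg_lt_neg (Real.log_lt_log h2
    ((div_lt_div_iff_of_pos_right (by exact_mod_cast Nat.factorial_pos n)).mpr this))

/-- `F r = ∏_{n≥0} Γ(n+1, r²)/n!`. -/
noncomputable def Fprod (r : ℝ) : ℝ := ∏' n : ℕ, uGamma n (r ^ 2) / (Nat.factorial n : ℝ)

noncomputable def Lsum (t : ℝ) : ℝ := ∑' n, nlt n t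

lemma Fprod_eq (r : ℝ) : Fprod r = Real.exp (-(Lsum (r ^ 2))) := by
  have ht : (0:ℝ) ≤ r ^ 2 := sq_nonneg r
  have hsum : Summable fun n => Real.log (uGamma n (r ^ 2) / (Nat.factorial n : ℝ)) := by
    have := (summable_nlt ht).neg
    simpa [nlt] using this
  have hfun : (Real.exp ∘ fun n => Real.log (uGamma n (r ^ 2) / (Nat.factorial n : ℝ)))
      = fun n => uGamma n (r ^ 2) / (Nat.factorial n : ℝ) :=
    funext fun n => Real.exp_log (g_pos n ht)
  have hp := hsum.hasSum.rexp
  rw [hfun] at hp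
  rw [Fprod, hp.tprod_eq]
  congr 1
  rw [Lsum, ← tsum_neg]
  congr 1 with n
  simp [nlt]

lemma Lsum_nonneg {t : ℝ} (ht : 0 ≤ t) : 0 ≤ Lsum t :=
  tsum_nonneg fun n => nlt_nonneg n ht

lemma nlt_zero_eq (t : ℝ) : nlt 0 t = t := by
  have : uGamma 0 t = Real.exp (-t) := by
    simp only [uGamma, pow_zero, mul_one]
    exact integral_exp_neg_Ioi t
  simp [nlt, this, Real.log_exp]

lemma le_Lsum {t : ℝ} (ht : 0 ≤ t) : t ≤ Lsum t := by
  have := Summable.le_tsum (summable_nlt ht) 0 (fun j _ => nlt_nonneg j ht)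
  rwa [nlt_zero_eq] at this

lemma Lsum_lt {t₁ t₂ : ℝ} (h0 : 0 ≤ t₁) (h : t₁ < t₂) : Lsum t₁ < Lsum t₂ :=
  Summable.tsum_lt_tsum_of_nonneg (fun n => nlt_nonneg n h0)
    (fun n => nlt_mono n h0 h.le) (nlt_strictMono 0 h0 h) (summable_nlt (h0.trans h.le))

lemma Lsum_le {t : ℝ} (h0 : 0 ≤ t) (h : t ≤ 1/2) : Lsum t ≤ 4 * t := by
  have hgeo : Summable (fun n : ℕ => 2 * (t * (1/2 : ℝ) ^ n)) :=
    ((summable_geometric_of_lt_one (by norm_num) (by norm_num)).mul_left t).mul_left 2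
  have hbnd : ∀ n : ℕ, t ^ (n + 1) / (Nat.factorial (n + 1) : ℝ) ≤ t * (1/2) ^ n := by
    intro n
    have h1 : t ^ (n + 1) ≤ t * (1/2) ^ n := by
      rw [pow_succ']
      exact mul_le_mul_of_nonneg_left (pow_le_pow_left₀ h0 h n) h0
    have h2 : (1:ℝ) ≤ (Nat.factorial (n + 1) : ℝ) := by
      exact_mod_cast Nat.one_le_iff_ne_zero.mpr (Nat.factorial_pos (n+1)).ne'
    calc t ^ (n + 1) / (Nat.factorial (n + 1) : ℝ) ≤ t ^ (n + 1) / 1 := by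
          apply div_le_div_of_nonneg_left (by positivity) (by norm_num) h2
      _ = t ^ (n + 1) := div_one _
      _ ≤ t * (1/2) ^ n := h1
  have hterm : ∀ n : ℕ, nlt n t ≤ 2 * (t * (1/2) ^ n) := by
    intro n
    have hd : t ^ (n + 1) / (Nat.factorial (n + 1) : ℝ) ≤ 1/2 := by
      calc t ^ (n + 1) / (Nat.factorial (n + 1) : ℝ) ≤ t * (1/2) ^ n := hbnd n
        _ ≤ (1/2) * 1 := by
            apply mul_le_mul h (pow_le_one₀ (by norm_num) (by norm_num)) (by positivity) (by norm_num)
        _ = 1/2 := by norm_num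
    calc nlt n t ≤ 2 * (t ^ (n + 1) / (Nat.factorial (n + 1) : ℝ)) := nlt_le n h0 hd
      _ ≤ 2 * (t * (1/2) ^ n) := by linarith [hbnd n]
  calc Lsum t ≤ ∑' n : ℕ, 2 * (t * (1/2 : ℝ) ^ n) :=
        Summable.tsum_le_tsum hterm (summable_nlt h0) hgeo
    _ = 2 * (t * (1 - 1/2)⁻¹) := by
        rw [tsum_mul_left, tsum_mul_left, tsum_geometric_of_lt_one (by norm_num) (by norm_num)]
    _ = 4 * t := by rw [show ((1:ℝ)-1/2)⁻¹ = 2 by norm_num]; ring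

theorem prod_incomplete_gamma_strictAnti :
    (∀ r : ℝ, 0 < r → 0 < Fprod r ∧ Fprod r ≤ 1) ∧
    StrictAntiOn Fprod (Set.Ioi 0) ∧
    Tendsto Fprod (𝓝[>] 0) (𝓝 1) ∧
    Tendsto Fprod atTop (𝓝 0) := by
  have hFe : ∀ r : ℝ, Fprod r = Real.exp (-(Lsum (r ^ 2))) := Fprod_eq
  refine ⟨fun r _ => ?_, ?_, ?_, ?_⟩
  · rw [hFe r]
    exact ⟨Real.exp_pos _, Real.exp_le_one_iff.mpr
      (neg_nonpos.mpr (Lsum_nonneg (sq_nonneg r)))⟩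
  · intro r₁ h1 r₂ _ h12
    rw [hFe r₁, hFe r₂]
    exact Real.exp_lt_exp.mpr (neg_lt_neg (Lsum_lt (sq_nonneg r₁)
      (pow_lt_pow_left₀ h12 (le_of_lt h1) two_ne_zero)))
  · have hsq : Tendsto (fun r : ℝ => r ^ 2) (𝓝[>] 0) (𝓝 0) :=
      ((continuous_pow 2).tendsto' 0 0 (by norm_num)).mono_left nhdsWithin_le_nhds
    have hev : ∀ᶠ r : ℝ in 𝓝[>] 0, r ^ 2 ≤ 1/2 :=
      hsq.eventually (eventually_le_nhds (by norm_num))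
    have hL : Tendsto (fun r : ℝ => Lsum (r ^ 2)) (𝓝[>] 0) (𝓝 0) := by
      refine squeeze_zero' (Eventually.of_forall fun r => Lsum_nonneg (sq_nonneg r))
        (hev.mono fun r hr => Lsum_le (sq_nonneg r) hr) ?_
      have : Tendsto (fun r : ℝ => 4 * r ^ 2) (𝓝[>] 0) (𝓝 0) := by
        simpa using (hsq.const_mul (4:ℝ))
      exact this
    have : Tendsto Fprod (𝓝[>] 0) (𝓝 (Real.exp (-0))) := by
      rw [funext hFe]
      exact (Real.continuous_exp.tendsto _).comp hL.neg
    simpa using this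
  · have hup : ∀ r : ℝ, Fprod r ≤ Real.exp (-(r ^ 2)) := fun r => by
      rw [hFe r]
      exact Real.exp_le_exp.mpr (neg_le_neg (le_Lsum (sq_nonneg r)))
    have hlo : ∀ r : ℝ, 0 ≤ Fprod r := fun r => by
      rw [hFe r]; exact (Real.exp_pos _).le
    refine squeeze_zero hlo hup ?_
    exact Real.tendsto_exp_neg_atTop_nhds_zero.comp (tendsto_pow_atTop two_ne_zero)
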